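/- arXiv:2402.11475 — 6 statements merged into one kernel-verified Lean document; each statement's English description precedes it below -/
import Mathlib

section
/- Let S be a commutative semigroup and let P be a downward complete subsemigroup of the semigroup P(S) of nonempty subsets of S under setwise multiplication. Then an element A of P is cancellative in P if and only if A is a singleton {u} for some element u of S that is cancellative in S. -/
open Pointwise

/-- A subsemigroup of the large power semigroup of `S` (presented as a family of nonempty
subsets of `S` closed under setwise multiplication) is *downward complete* if every element
of `S` lies in at least one member and every nonempty subset of a member is itself a member. -/
def DownwardComplete {S : Type*} [Semigroup S] (P : Set (Set S)) : Prop :=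
  (∀ X ∈ P, X.Nonempty) ∧
  (∀ X ∈ P, ∀ Y ∈ P, X * Y ∈ P) ∧
  (∀ s : S, ∃ X ∈ P, s ∈ X) ∧
  (∀ X ∈ P, ∀ Y : Set S, Y.Nonempty → Y ⊆ X → Y ∈ P)

/-- An element `A` of a family `P` of subsets of `S` is cancellative in `P` if setwise
multiplication by `A` on either side is injective on `P`. -/
def CancellativeIn {S : Type*} [Semigroup S] (P : Set (Set S)) (A : Set S) : Prop :=
  (∀ X ∈ P, ∀ Y ∈ P, A * X = A * Y → X = Y) ∧
  (∀ X ∈ P, ∀ Y ∈ P, X * A = Y * A → X = Y)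

/-!
If `A ∈ P` contains two distinct elements `a ≠ b`, one exhibits `X ∈ P` and `x ∈ X` such that
`A * (X \ {x}) = A * X`; since `X \ {x}` is again in `P`, this contradicts cancellativity.
If `a * a = a * b`, take `X = A` and `x = a`; otherwise take `X = A * A` and `x = a * b`.
So a cancellative `A` is a singleton `{u}`, and multiplication by `{u}` is the image under
multiplication by `u`, which is injective on sets exactly when it is injective on elements.
-/

section Semigroup

variable {S : Type*} [Semigroup S] {P : Set (Set S)}

theorem DownwardComplete.singleton_mem (hP : DownwardComplete P) (s : S) : {s} ∈ P := by
  obtain ⟨X, hX, hsX⟩ := hP.2.2.1 s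
  exact hP.2.2.2 X hX {s} (Set.singleton_nonempty s) (Set.singleton_subset_iff.2 hsX)

theorem DownwardComplete.diff_singleton_mem (hP : DownwardComplete P) {X : Set S} (hX : X ∈ P)
    {x y : S} (hy : y ∈ X) (hyx : y ≠ x) : X \ {x} ∈ P :=
  hP.2.2.2 X hX _ ⟨y, hy, hyx⟩ Set.sdiff_subset

theorem CancellativeIn.not_mul_singleton_subset_mul_diff (hP : DownwardComplete P)
    {A X : Set S} (hA : CancellativeIn P A) (hX : X ∈ P) {x y : S} (hx : x ∈ X) (hy : y ∈ X)
    (hyx : y ≠ x) : ¬ A * {x} ⊆ A * (X \ {x}) := by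
  intro hsub
  have hmul : A * (X \ {x}) = A * X := by
    refine (Set.mul_subset_mul_left Set.sdiff_subset).antisymm ?_
    calc A * X = A * (X \ {x} ∪ {x}) := by
          rw [Set.sdiff_union_of_subset (Set.singleton_subset_iff.2 hx)]
      _ = A * (X \ {x}) ∪ A * {x} := Set.mul_union
      _ ⊆ A * (X \ {x}) := Set.union_subset le_rfl hsub
  have hdiff : X \ {x} = X := hA.1 _ (hP.diff_singleton_mem hX hy hyx) X hX hmul
  exact (hdiff ▸ hx).2 rfl

theorem CancellativeIn.injective_mul_left (hP : DownwardComplete P) {u : S}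
    (hu : CancellativeIn P {u}) : Function.Injective (fun x : S => u * x) := fun x y hxy =>
  Set.singleton_injective <| hu.1 _ (hP.singleton_mem x) _ (hP.singleton_mem y) <| by
    simp only [Set.singleton_mul_singleton, hxy]

theorem CancellativeIn.injective_mul_right (hP : DownwardComplete P) {u : S}
    (hu : CancellativeIn P {u}) : Function.Injective (fun x : S => x * u) := fun x y hxy =>
  Set.singleton_injective <| hu.2 _ (hP.singleton_mem x) _ (hP.singleton_mem y) <| by
    simp only [Set.singleton_mul_singleton, hxy]

theorem cancellativeIn_singleton {u : S} (hl : Function.Injective (fun x : S => u * x))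
    (hr : Function.Injective (fun x : S => x * u)) : CancellativeIn P {u} := by
  refine ⟨fun X _ Y _ h => ?_, fun X _ Y _ h => ?_⟩
  · rw [Set.singleton_mul, Set.singleton_mul] at h
    exact Set.image_injective.2 hl h
  · rw [Set.mul_singleton, Set.mul_singleton] at h
    exact Set.image_injective.2 hr h

end Semigroup

theorem CancellativeIn.eq_singleton {S : Type*} [CommSemigroup S] {P : Set (Set S)}
    (hP : DownwardComplete P) {A : Set S} (hAc : CancellativeIn P A) (hA : A ∈ P) {a : S}
    (ha : a ∈ A) : A = {a} := by
  refine Set.eq_singleton_iff_unique_mem.2 ⟨ha, fun b hb => ?_⟩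
  by_contra hba
  by_cases haa : a * a = a * b
  · refine hAc.not_mul_singleton_subset_mul_diff hP hA ha hb hba ?_
    rw [Set.mul_singleton, Set.image_subset_iff]
    intro c hc
    by_cases hca : c = a
    · exact ⟨a, ha, b, ⟨hb, hba⟩, hca ▸ haa.symm⟩
    · exact ⟨a, ha, c, ⟨hc, hca⟩, mul_comm a c⟩
  · have haaA : a * a ∈ A * A := Set.mul_mem_mul ha ha
    refine hAc.not_mul_singleton_subset_mul_diff hP (hP.2.1 A hA A hA)
      (Set.mul_mem_mul ha hb) haaA haa ?_
    rw [Set.mul_singleton, Set.image_subset_iff]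
    intro c hc
    by_cases hcb : c * b = a * b
    · refine ⟨b, hb, a * a, ⟨haaA, haa⟩, ?_⟩
      calc b * (a * a) = a * (a * b) := by rw [mul_left_comm, mul_comm b a]
        _ = a * (c * b) := by rw [hcb]
        _ = c * (a * b) := mul_left_comm a c b
    · exact ⟨a, ha, c * b, ⟨Set.mul_mem_mul hc hb, hcb⟩, mul_left_comm a c b⟩

/-- Let `S` be a commutative semigroup and `P` a downward complete
subsemigroup of the semigroup of nonempty subsets of `S` under setwise multiplication.
An element `A ∈ P` is cancellative in `P` iff `A = {u}` for some cancellative `u ∈ S`. -/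
theorem cancellative_iff_singleton_of_downwardComplete {S : Type*} [CommSemigroup S]
    (P : Set (Set S)) (hP : DownwardComplete P) (A : Set S) (hA : A ∈ P) :
    CancellativeIn P A ↔
      ∃ u : S, A = {u} ∧ Function.Injective (fun x : S => u * x) ∧
        Function.Injective (fun x : S => x * u) := by
  constructor
  · intro hAc
    obtain ⟨a, ha⟩ := hP.1 A hA
    obtain rfl := hAc.eq_singleton hP hA ha
    exact ⟨a, rfl, hAc.injective_mul_left hP, hAc.injective_mul_right hP⟩
  · rintro ⟨u, rfl, hl, hr⟩
    exact cancellativeIn_singleton hl hr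
end

section
/- Let S be a commutative semigroup and let A be a subset of S such that there are no elements x, y ∈ A with x ≠ y and x*x = x*y. Let a, b ∈ A with a ≠ b, and set B := (A*A) \ {a*b}. Then b*b ∈ B (so B is a nonempty proper subset of A*A) and, under setwise multiplication, A*(A*A) = A*B. -/
open Pointwise

/-! Only the products `x * (a * b)` with `x ∈ A` need a new factorization through
`(A * A) \ {a * b}`. Since `x * (a * b) = a * (x * b)`, this works unless `x * b = a * b`; in that case
`x * (a * b) = x * (x * b) = b * (x * x)`, and `x * x ≠ a * b` because `x * x = x * b` would
force `x = b`, while `b * b ≠ a * b` by the hypothesis on `A` applied to `b` and `a`. -/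

namespace Set

theorem mul_subset_mul_diff_singleton_of_mul_singleton_subset {M : Type*} [Mul M]
    {A B : Set M} {c : M} (h : A * {c} ⊆ A * (B \ {c})) : A * B ⊆ A * (B \ {c}) :=
  calc A * B ⊆ A * (B \ {c} ∪ {c}) :=
        mul_subset_mul_left (sdiff_union_self.symm ▸ subset_union_left)
    _ = A * (B \ {c}) ∪ A * {c} := mul_union
    _ ⊆ A * (B \ {c}) := union_subset le_rfl h

section CancelSquare

variable {S : Type*} [CommSemigroup S] {A : Set S}
  (hA : ∀ x ∈ A, ∀ y ∈ A, x * x = x * y → x = y) {a b : S}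
include hA

theorem mul_self_ne_mul_of_sq_cancel (ha : a ∈ A) (hb : b ∈ A) (hab : a ≠ b) :
    b * b ≠ a * b := fun h => hab (hA b hb a ha (h.trans (mul_comm a b))).symm

theorem mul_singleton_mul_subset_mul_diff_of_sq_cancel (ha : a ∈ A) (hb : b ∈ A)
    (hab : a ≠ b) : A * {a * b} ⊆ A * ((A * A) \ {a * b}) := by
  rintro _ ⟨x, hx, _, rfl, rfl⟩
  by_cases hxb : x * b = a * b
  · have hxx : x * x ≠ a * b := fun h => by
      obtain rfl : x = b := hA x hx b hb (h.trans hxb.symm)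
      exact mul_self_ne_mul_of_sq_cancel hA ha hb hab h
    refine ⟨b, hb, x * x, ⟨mul_mem_mul hx hx, hxx⟩, ?_⟩
    calc b * (x * x) = x * (x * b) := by ac_rfl
      _ = x * (a * b) := by rw [hxb]
  · exact ⟨a, ha, x * b, ⟨mul_mem_mul hx hb, hxb⟩, mul_left_comm a x b⟩

end CancelSquare

end Set

/-- Let `S` be a commutative semigroup and `A ⊆ S` such that there are no
`x, y ∈ A` with `x ≠ y` and `x * x = x * y`. Let `a, b ∈ A` with `a ≠ b` and set
`B := (A * A) \ {a * b}`. Then `b * b ∈ B` (so `B` is a nonempty proper subset of `A * A`)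
and `A * (A * A) = A * B` under setwise multiplication. -/
theorem cube_eq_mul_diff {S : Type*} [CommSemigroup S] (A : Set S)
    (hA : ¬ ∃ x ∈ A, ∃ y ∈ A, x ≠ y ∧ x * x = x * y)
    {a b : S} (ha : a ∈ A) (hb : b ∈ A) (hab : a ≠ b) :
    b * b ∈ (A * A) \ {a * b} ∧ A * (A * A) = A * ((A * A) \ {a * b}) := by
  have hcancel : ∀ x ∈ A, ∀ y ∈ A, x * x = x * y → x = y := fun x hx y hy h =>
    by_contra fun hxy => hA ⟨x, hx, y, hy, hxy, h⟩
  refine ⟨⟨Set.mul_mem_mul hb hb, Set.mul_self_ne_mul_of_sq_cancel hcancel ha hb hab⟩, ?_⟩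
  exact (Set.mul_subset_mul_diff_singleton_of_mul_singleton_subset
    (Set.mul_singleton_mul_subset_mul_diff_of_sq_cancel hcancel ha hb hab)).antisymm
    (Set.mul_subset_mul_left Set.sdiff_subset)
end

section
/- Let H and K be cancellative semigroups, at least one of which is commutative. Let P be a downward complete subsemigroup of P(H) and Q a downward complete subsemigroup of P(K), and let f : P → Q be a semigroup isomorphism. Then f maps singletons to singletons; more precisely, there is a semigroup isomorphism g : H → K such that f({x}) = {g(x)} for every x ∈ H. -/
/-!
In a commutative cancellative semigroup the singletons are exactly the members of a downward
complete family `P` that can be cancelled inside `P`: if `a ≠ b` lie in `X`, then deleting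
`a * b` from `X * X` does not change the product with `X`. Cancellability, and commutativity of
the family, are preserved by an isomorphism `P ≃ Q`; commutativity of `P` is that of `H`, so
both `H` and `K` are commutative and `f` restricts to a bijection between singletons.
-/

open Pointwise

open Set Function

theorem Set.singleton_mul_injective {S : Type*} [Mul S] [IsLeftCancelMul S] (x : S) :
    Injective (({x} : Set S) * ·) := by
  simp only [singleton_mul]
  exact image_injective.2 (mul_right_injective x)

theorem Set.commute_of_forall_commute {S : Type*} [Mul S] (hcomm : ∀ a b : S, Commute a b)
    (X Y : Set S) : Commute X Y := by
  change image2 _ X Y = image2 _ Y X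
  rw [image2_swap]
  simp only [(hcomm _ _).eq]

namespace Set.BijOn

variable {M N : Type*} [Mul M] [Mul N] {f : M → N} {P : Set M} {Q : Set N}

theorem forall_commute_iff (hf : BijOn f P Q)
    (hmul : ∀ X ∈ P, ∀ Y ∈ P, f (X * Y) = f X * f Y) (hP : ∀ X ∈ P, ∀ Y ∈ P, X * Y ∈ P) :
    (∀ X ∈ P, ∀ Y ∈ P, Commute X Y) ↔ ∀ X ∈ Q, ∀ Y ∈ Q, Commute X Y := by
  constructor
  · intro h _ hX' _ hY'
    obtain ⟨X, hX, rfl⟩ := hf.surjOn hX'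
    obtain ⟨Y, hY, rfl⟩ := hf.surjOn hY'
    change f X * f Y = f Y * f X
    rw [← hmul X hX Y hY, ← hmul Y hY X hX, (h X hX Y hY).eq]
  · intro h X hX Y hY
    refine hf.injOn (hP X hX Y hY) (hP Y hY X hX) ?_
    rw [hmul X hX Y hY, hmul Y hY X hX, (h _ (hf.mapsTo hX) _ (hf.mapsTo hY)).eq]

theorem injOn_mul_iff (hf : BijOn f P Q)
    (hmul : ∀ X ∈ P, ∀ Y ∈ P, f (X * Y) = f X * f Y) (hP : ∀ X ∈ P, ∀ Y ∈ P, X * Y ∈ P)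
    {X : M} (hX : X ∈ P) : InjOn (f X * ·) Q ↔ InjOn (X * ·) P := by
  constructor
  · intro h Y hY Z hZ hYZ
    refine hf.injOn hY hZ (h (hf.mapsTo hY) (hf.mapsTo hZ) ?_)
    simp only [← hmul X hX Y hY, ← hmul X hX Z hZ, hYZ]
  · intro h _ hY' _ hZ' hYZ
    obtain ⟨Y, hY, rfl⟩ := hf.surjOn hY'
    obtain ⟨Z, hZ, rfl⟩ := hf.surjOn hZ'
    simp only [← hmul X hX Y hY, ← hmul X hX Z hZ] at hYZ
    rw [h hY hZ (hf.injOn (hP X hX Y hY) (hP X hX Z hZ) hYZ)]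

end Set.BijOn

namespace DownwardComplete

variable {S : Type*} [Semigroup S] {P : Set (Set S)}

theorem nonempty (hP : DownwardComplete P) {X : Set S} (hX : X ∈ P) : X.Nonempty :=
  hP.1 X hX

theorem mul_mem (hP : DownwardComplete P) : ∀ X ∈ P, ∀ Y ∈ P, X * Y ∈ P :=
  hP.2.1

theorem mem_of_subset (hP : DownwardComplete P) {X Y : Set S} (hX : X ∈ P) (hY : Y.Nonempty)
    (hYX : Y ⊆ X) : Y ∈ P :=
  hP.2.2.2 X hX Y hY hYX

theorem singleton_mem_s4 (hP : DownwardComplete P) (s : S) : {s} ∈ P := by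
  obtain ⟨X, hX, hs⟩ := hP.2.2.1 s
  exact hP.mem_of_subset hX (singleton_nonempty s) (singleton_subset_iff.2 hs)

theorem forall_commute_iff (hP : DownwardComplete P) :
    (∀ X ∈ P, ∀ Y ∈ P, Commute X Y) ↔ ∀ a b : S, Commute a b := by
  refine ⟨fun h a b => ?_, fun h X _ Y _ => commute_of_forall_commute h X Y⟩
  have := (h _ (hP.singleton_mem_s4 a) _ (hP.singleton_mem_s4 b)).eq
  rw [singleton_mul_singleton, singleton_mul_singleton] at this
  exact singleton_injective this

theorem subsingleton_of_injOn_mul [IsLeftCancelMul S] (hcomm : ∀ a b : S, Commute a b)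
    (hP : DownwardComplete P) {X : Set S} (hX : X ∈ P) (hinj : InjOn (X * ·) P) :
    X.Subsingleton := by
  intro a ha b hb
  by_contra hab
  have hne : ∀ {x y : S}, x ≠ y → a * x ≠ a * y := fun h h' => h (mul_left_cancel h')
  have hXX := hP.mul_mem X hX X hX
  have hW : (X * X) \ {a * b} ∈ P :=
    hP.mem_of_subset hXX ⟨a * a, mul_mem_mul ha ha, hne hab⟩ sdiff_subset
  -- `x * (a * b)` is also `a * (x * b)`, and `b * (a * a)` when `x = a`.
  have hXW : X * ((X * X) \ {a * b}) = X * (X * X) := by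
    refine (mul_subset_mul_left sdiff_subset).antisymm ?_
    rintro _ ⟨x, hx, _, ⟨u, hu, v, hv, rfl⟩, rfl⟩
    dsimp only
    by_cases huv : u * v = a * b
    · rw [huv]
      by_cases hxa : x = a
      · rw [hxa]
        refine ⟨b, hb, a * a, ⟨mul_mem_mul ha ha, hne hab⟩, ?_⟩
        change b * (a * a) = a * (a * b)
        rw [(hcomm b a).left_comm, (hcomm b a).eq]
      · refine ⟨a, ha, x * b, ⟨mul_mem_mul hx hb, ?_⟩, (hcomm a x).left_comm b⟩
        rw [(hcomm x b).eq, (hcomm a b).eq]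
        exact fun h => hxa (mul_left_cancel h)
    · exact ⟨x, hx, u * v, ⟨mul_mem_mul hu hv, huv⟩, rfl⟩
  have hab_mem : a * b ∈ (X * X) \ {a * b} := (hinj hW hXX hXW).symm ▸ mul_mem_mul ha hb
  exact hab_mem.2 rfl

theorem injOn_mul_iff_exists_eq_singleton [IsLeftCancelMul S]
    (hcomm : ∀ a b : S, Commute a b) (hP : DownwardComplete P) {X : Set S} (hX : X ∈ P) :
    InjOn (X * ·) P ↔ ∃ x, X = {x} := by
  refine ⟨fun h => ?_, ?_⟩
  · obtain ⟨x, hx⟩ := hP.nonempty hX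
    exact ⟨x, (hP.subsingleton_of_injOn_mul hcomm hX h).eq_singleton_of_mem hx⟩
  · rintro ⟨x, rfl⟩
    exact (singleton_mul_injective x).injOn

end DownwardComplete

theorem exists_mulEquiv_of_bijOn_singletons {H K : Type*} [Mul H] [Mul K]
    {P : Set (Set H)} {Q : Set (Set K)} {f : Set H → Set K}
    (hP : ∀ x : H, {x} ∈ P) (hQ : ∀ y : K, {y} ∈ Q) (hf : BijOn f P Q)
    (hmul : ∀ X ∈ P, ∀ Y ∈ P, f (X * Y) = f X * f Y)
    (hsingleton : ∀ X ∈ P, (∃ x, X = {x}) ↔ ∃ y, f X = {y}) :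
    ∃ g : H ≃* K, ∀ x : H, f {x} = {g x} := by
  choose g hg using fun x => (hsingleton {x} (hP x)).1 ⟨x, rfl⟩
  have hg_inj : Injective g := fun x x' h =>
    singleton_injective (hf.injOn (hP x) (hP x') (by rw [hg, hg, h]))
  have hg_surj : Surjective g := by
    intro y
    obtain ⟨X, hX, hXy⟩ := hf.surjOn (hQ y)
    obtain ⟨x, rfl⟩ := (hsingleton X hX).2 ⟨y, hXy⟩
    exact ⟨x, singleton_injective ((hg x).symm.trans hXy)⟩
  have hg_mul (x x' : H) : g (x * x') = g x * g x' := by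
    apply singleton_injective
    rw [← singleton_mul_singleton, ← hg, ← hg, ← hg, ← hmul _ (hP x) _ (hP x'),
      singleton_mul_singleton]
  exact ⟨MulEquiv.ofBijective (MulHom.mk g hg_mul) ⟨hg_inj, hg_surj⟩, hg⟩

/-- Let `H` and `K` be cancellative semigroups, at least one of which is
commutative, `P` a downward complete subsemigroup of `𝒫(H)`, `Q` a downward complete
subsemigroup of `𝒫(K)`, and `f` a semigroup isomorphism from `P` to `Q` (a bijection of `P`
onto `Q` respecting setwise multiplication). Then `f` maps singletons to singletons; more
precisely, there is a semigroup isomorphism `g : H ≃* K` with `f {x} = {g x}` for all `x`. -/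
theorem iso_of_downwardComplete_maps_singletons {H K : Type*} [Semigroup H] [Semigroup K]
    [IsCancelMul H] [IsCancelMul K]
    (hcomm : (∀ a b : H, a * b = b * a) ∨ (∀ a b : K, a * b = b * a))
    (P : Set (Set H)) (Q : Set (Set K))
    (hP : DownwardComplete P) (hQ : DownwardComplete Q)
    (f : Set H → Set K)
    (hmaps : ∀ X ∈ P, f X ∈ Q)
    (hinj : Set.InjOn f P)
    (hsurj : ∀ Y ∈ Q, ∃ X ∈ P, f X = Y)
    (hmul : ∀ X ∈ P, ∀ Y ∈ P, f (X * Y) = f X * f Y) :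
    ∃ g : H ≃* K, ∀ x : H, f {x} = {g x} := by
  have hf : BijOn f P Q := ⟨hmaps, hinj, hsurj⟩
  have hPQ := hf.forall_commute_iff hmul hP.mul_mem
  have hH : ∀ a b : H, Commute a b := hP.forall_commute_iff.1 <|
    hcomm.elim (hP.forall_commute_iff.2 ·) (hPQ.2 <| hQ.forall_commute_iff.2 ·)
  have hK : ∀ a b : K, Commute a b := hQ.forall_commute_iff.1 (hPQ.1 (hP.forall_commute_iff.2 hH))
  refine exists_mulEquiv_of_bijOn_singletons hP.singleton_mem_s4 hQ.singleton_mem_s4 hf hmul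
    fun X hX => ?_
  rw [← hP.injOn_mul_iff_exists_eq_singleton hH hX,
    ← hQ.injOn_mul_iff_exists_eq_singleton hK (hmaps X hX), hf.injOn_mul_iff hmul hP.mul_mem hX]
end

section
/- Let H and K be cancellative semigroups, at least one of which is commutative. Then the semigroup P(H) of nonempty subsets of H under setwise multiplication is isomorphic to the semigroup P(K) of nonempty subsets of K if and only if H is isomorphic to K. -/
/-!
In the power semigroup of a commutative cancellative semigroup the left-cancellable elements are
exactly the singletons: if `a ≠ b` lie in `X` and `T = {a, b} * X`, then
`X * T = X * (T \ {a * b})`, because `x * (a * b)` is also `b * (a * x)` and, for `x = b`,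
`a * (b * b)`. Commutativity of a power semigroup is detected on singletons, so an isomorphism
`P(H) ≃* P(K)` makes both `H` and `K` commutative and then carries singletons onto singletons,
which gives `H ≃* K`. Conversely an isomorphism `H ≃* K` acts on nonempty subsets by taking
images.
-/

open Pointwise

/-- The large power semigroup of `S`: nonempty subsets under setwise multiplication. -/
noncomputable instance largePowerSemigroup (S : Type*) [Semigroup S] :
    Semigroup {X : Set S // X.Nonempty} where
  mul X Y := ⟨X.1 * Y.1, X.2.mul Y.2⟩
  mul_assoc X Y Z := Subtype.ext (mul_assoc X.1 Y.1 Z.1)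

open Function

noncomputable def MulEquiv.ofMapsRange {H K M N : Type*} [Mul H] [Mul K] [Mul M] [Mul N]
    (ι : H →ₙ* M) (κ : K →ₙ* N) (hι : Injective ι) (hκ : Injective κ) (φ : M ≃* N)
    (h : ∀ x, φ x ∈ Set.range κ ↔ x ∈ Set.range ι) : H ≃* K where
  toEquiv := (Equiv.ofInjective ι hι).trans
    ((φ.toEquiv.subtypeEquiv fun x => (h x).symm).trans (Equiv.ofInjective κ hκ).symm)
  map_mul' a b := hκ <| by simp [Equiv.apply_ofInjective_symm]

theorem MulEquiv.forall_mul_comm_iff {M N : Type*} [Mul M] [Mul N] (φ : M ≃* N) :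
    (∀ a b : M, a * b = b * a) ↔ ∀ a b : N, a * b = b * a :=
  ⟨fun h _ _ => φ.symm.injective (by simp only [map_mul, h]),
    fun h _ _ => φ.injective (by simp only [map_mul, h])⟩

theorem MulEquiv.isLeftRegular_apply_iff {M N : Type*} [Mul M] [Mul N] (φ : M ≃* N) {x : M} :
    IsLeftRegular (φ x) ↔ IsLeftRegular x := by
  have : (φ x * ·) = φ ∘ (x * ·) ∘ φ.symm := funext fun y => by simp
  rw [IsLeftRegular, this, EquivLike.comp_injective, EquivLike.injective_comp]
  rfl

theorem Set.mul_pair_mul_diff_eq {S : Type*} [Semigroup S] [IsCancelMul S]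
    (hc : ∀ a b : S, a * b = b * a) {X : Set S} {a b : S} (ha : a ∈ X) (hb : b ∈ X)
    (hab : a ≠ b) : X * (({a, b} * X) \ {a * b}) = X * ({a, b} * X) := by
  refine (Set.mul_subset_mul_left Set.sdiff_subset).antisymm ?_
  rintro _ ⟨x, hx, t, ht, rfl⟩
  rcases ne_or_eq t (a * b) with hab' | rfl
  · exact Set.mul_mem_mul hx ⟨ht, hab'⟩
  rcases eq_or_ne b x with rfl | hxb
  · refine ⟨a, ha, b * b, ⟨Set.mul_mem_mul (by simp) hb, ?_⟩, ?_⟩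
    · exact fun h => hab (mul_right_cancel h).symm
    show a * (b * b) = b * (a * b)
    rw [← mul_assoc, ← mul_assoc, hc a b]
  · refine ⟨b, hb, a * x, ⟨Set.mul_mem_mul (by simp) hx, ?_⟩, ?_⟩
    · exact fun h => hxb (mul_left_cancel h).symm
    show b * (a * x) = x * (a * b)
    rw [← mul_assoc, hc b, hc (a * b)]

namespace largePowerSemigroup

variable {S : Type*} [Semigroup S]

@[simp]
theorem val_mul (X Y : {X : Set S // X.Nonempty}) : (X * Y).1 = X.1 * Y.1 := rfl

variable (S) in
def singletonHom : S →ₙ* {X : Set S // X.Nonempty} where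
  toFun a := ⟨{a}, Set.singleton_nonempty a⟩
  map_mul' _ _ := Subtype.ext Set.singleton_mul_singleton.symm

@[simp]
theorem val_singletonHom (a : S) : (singletonHom S a).1 = {a} := rfl

theorem singletonHom_injective : Injective (singletonHom S) :=
  fun _ _ h => Set.singleton_injective (congrArg Subtype.val h)

theorem mem_range_singletonHom {X : {X : Set S // X.Nonempty}} :
    X ∈ Set.range (singletonHom S) ↔ ∃ a, X.1 = {a} :=
  ⟨fun ⟨a, h⟩ => ⟨a, congrArg Subtype.val h.symm⟩,
    fun ⟨a, h⟩ => ⟨a, Subtype.ext h.symm⟩⟩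

theorem forall_mul_comm_iff :
    (∀ X Y : {X : Set S // X.Nonempty}, X * Y = Y * X) ↔ ∀ a b : S, a * b = b * a := by
  refine ⟨fun h a b => singletonHom_injective (by simpa only [map_mul] using h _ _), ?_⟩
  intro hc X Y
  let _ : CommSemigroup S := { mul_comm := hc }
  exact Subtype.ext (mul_comm X.1 Y.1)

theorem isLeftRegular_singletonHom [IsLeftCancelMul S] (a : S) :
    IsLeftRegular (singletonHom S a) := fun Y Z h => by
  have h' : (a * ·) '' Y.1 = (a * ·) '' Z.1 := by
    simpa only [val_mul, val_singletonHom, Set.singleton_mul]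
      using congrArg Subtype.val h
  exact Subtype.ext (Set.image_injective.2 (mul_right_injective a) h')

theorem isLeftRegular_iff_mem_range_singletonHom [IsCancelMul S]
    (hc : ∀ a b : S, a * b = b * a) {X : {X : Set S // X.Nonempty}} :
    IsLeftRegular X ↔ X ∈ Set.range (singletonHom S) := by
  refine ⟨fun hX => ?_, fun ⟨a, ha⟩ => ha ▸ isLeftRegular_singletonHom a⟩
  rw [mem_range_singletonHom]
  obtain ⟨a, ha⟩ := X.2
  by_cases hsub : X.1.Subsingleton
  · exact ⟨a, hsub.eq_singleton_of_mem ha⟩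
  obtain ⟨a, ha, b, hb, hab⟩ := Set.not_subsingleton_iff.1 hsub
  set T := {a, b} * X.1
  have hT : X.1 * (T \ {a * b}) = X.1 * T := Set.mul_pair_mul_diff_eq hc ha hb hab
  have hTne : T.Nonempty := ⟨a * a, Set.mul_mem_mul (by simp) ha⟩
  have hQne : (T \ {a * b}).Nonempty := Set.Nonempty.of_mul_right (hT ▸ X.2.mul hTne)
  have hQT : T \ {a * b} = T :=
    congrArg Subtype.val (hX (a₁ := ⟨_, hQne⟩) (a₂ := ⟨T, hTne⟩) (Subtype.ext hT))
  have hab : a * b ∈ T := Set.mul_mem_mul (Set.mem_insert a _) hb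
  rw [← hQT] at hab
  exact (hab.2 rfl).elim

end largePowerSemigroup

open largePowerSemigroup in
def MulEquiv.largePowerSemigroupCongr {H K : Type*} [Semigroup H] [Semigroup K] (e : H ≃* K) :
    {X : Set H // X.Nonempty} ≃* {X : Set K // X.Nonempty} where
  toEquiv := (Equiv.Set.congr e.toEquiv).subtypeEquiv fun _ => Set.image_nonempty.symm
  map_mul' _ _ := Subtype.ext (Set.image_mul e)

open largePowerSemigroup in
/-- Let `H` and `K` be cancellative semigroups, at least one of which is
commutative. Then the semigroup of nonempty subsets of `H` under setwise multiplication is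
isomorphic to that of `K` if and only if `H` is isomorphic to `K`. -/
theorem globally_isomorphic_iff_isomorphic {H K : Type*} [Semigroup H] [Semigroup K]
    [IsCancelMul H] [IsCancelMul K]
    (hcomm : (∀ a b : H, a * b = b * a) ∨ (∀ a b : K, a * b = b * a)) :
    Nonempty ({X : Set H // X.Nonempty} ≃* {X : Set K // X.Nonempty}) ↔
      Nonempty (H ≃* K) := by
  refine ⟨fun ⟨φ⟩ => ?_, fun ⟨e⟩ => ⟨e.largePowerSemigroupCongr⟩⟩
  have hc := φ.forall_mul_comm_iff
  rw [forall_mul_comm_iff, forall_mul_comm_iff] at hc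
  obtain ⟨hcH, hcK⟩ : (∀ a b : H, a * b = b * a) ∧ ∀ a b : K, a * b = b * a :=
    hcomm.elim (fun hH => ⟨hH, hc.1 hH⟩) fun hK => ⟨hc.2 hK, hK⟩
  refine ⟨MulEquiv.ofMapsRange _ _ singletonHom_injective singletonHom_injective φ fun X => ?_⟩
  rw [← isLeftRegular_iff_mem_range_singletonHom hcK, φ.isLeftRegular_apply_iff,
    isLeftRegular_iff_mem_range_singletonHom hcH]
end

section
/- Let V be a nonempty type and let F be the free semigroup over V. Let X be a nonempty subset of the set {of(v) : v ∈ V} of length-one words in F. Then X is a cancellative element of the semigroup of nonempty subsets of F under setwise multiplication: for all nonempty Y₁, Y₂ ⊆ F, X*Y₁ = X*Y₂ implies Y₁ = Y₂, and Y₁*X = Y₂*X implies Y₁ = Y₂. In particular (taking |V| ≥ 2), a cancellative element of the semigroup of nonempty subsets of a cancellative semigroup need not be a singleton. -/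
/-!
A word of the free semigroup starting (or ending) with a letter determines that letter and the
rest of the word, so each element of `X * Y` has exactly one factorisation `x * y`. Reading off
the `y`'s recovers `Y` from `X * Y`, provided `X` is nonempty.
-/

open Pointwise

namespace FreeSemigroup

variable {α : Type*}

theorem of_mul_inj {a b : α} {y y' : FreeSemigroup α} :
    of a * y = of b * y' ↔ a = b ∧ y = y' := by
  simp [FreeSemigroup.ext_iff, of]

theorem mul_of_inj {a b : α} {y y' : FreeSemigroup α} :
    y * of a = y' * of b ↔ y = y' ∧ a = b := by
  simp [FreeSemigroup.ext_iff, of, ← List.concat_eq_append, List.concat_inj, and_assoc]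

end FreeSemigroup

namespace Set

variable {S : Type*} [Mul S] {X Y₁ Y₂ : Set S}

theorem subset_of_mul_subset_mul_left (hX : X.Nonempty)
    (hX_cancel : ∀ x ∈ X, ∀ x' ∈ X, ∀ y y', x * y = x' * y' → y = y')
    (h : X * Y₁ ⊆ X * Y₂) : Y₁ ⊆ Y₂ := by
  obtain ⟨x, hx⟩ := hX
  intro y hy
  obtain ⟨x', hx', y', hy', hxy⟩ := h (mul_mem_mul hx hy)
  exact hX_cancel x' hx' x hx y' y hxy ▸ hy'

theorem subset_of_mul_subset_mul_right (hX : X.Nonempty)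
    (hX_cancel : ∀ x ∈ X, ∀ x' ∈ X, ∀ y y', y * x = y' * x' → y = y')
    (h : Y₁ * X ⊆ Y₂ * X) : Y₁ ⊆ Y₂ := by
  obtain ⟨x, hx⟩ := hX
  intro y hy
  obtain ⟨y', hy', x', hx', hxy⟩ := h (mul_mem_mul hy hx)
  exact hX_cancel x' hx' x hx y' y hxy ▸ hy'

theorem eq_of_mul_eq_mul_left (hX : X.Nonempty)
    (hX_cancel : ∀ x ∈ X, ∀ x' ∈ X, ∀ y y', x * y = x' * y' → y = y')
    (h : X * Y₁ = X * Y₂) : Y₁ = Y₂ :=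
  (subset_of_mul_subset_mul_left hX hX_cancel h.le).antisymm
    (subset_of_mul_subset_mul_left hX hX_cancel h.ge)

theorem eq_of_mul_eq_mul_right (hX : X.Nonempty)
    (hX_cancel : ∀ x ∈ X, ∀ x' ∈ X, ∀ y y', y * x = y' * x' → y = y')
    (h : Y₁ * X = Y₂ * X) : Y₁ = Y₂ :=
  (subset_of_mul_subset_mul_right hX hX_cancel h.le).antisymm
    (subset_of_mul_subset_mul_right hX hX_cancel h.ge)

end Set

theorem freeSemigroup_set_of_letters_cancellative_general {V : Type*}
    (X : Set (FreeSemigroup V)) (hX : X.Nonempty)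
    (hX1 : X ⊆ Set.range (FreeSemigroup.of : V → FreeSemigroup V)) :
    ∀ Y₁ Y₂ : Set (FreeSemigroup V), Y₁.Nonempty → Y₂.Nonempty →
      (X * Y₁ = X * Y₂ → Y₁ = Y₂) ∧ (Y₁ * X = Y₂ * X → Y₁ = Y₂) := by
  intro Y₁ Y₂ _ _
  refine ⟨Set.eq_of_mul_eq_mul_left hX ?_, Set.eq_of_mul_eq_mul_right hX ?_⟩
  all_goals
    intro x hx x' hx' y y' h
    obtain ⟨a, rfl⟩ := hX1 hx
    obtain ⟨b, rfl⟩ := hX1 hx'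
  · exact (FreeSemigroup.of_mul_inj.mp h).2
  · exact (FreeSemigroup.mul_of_inj.mp h).1

/-- Let `V` be a nonempty type and `X` a nonempty set of length-one words
in the free semigroup over `V`. Then `X` is a cancellative element of the semigroup of
nonempty subsets of the free semigroup under setwise multiplication: for all nonempty
`Y₁, Y₂`, `X * Y₁ = X * Y₂` implies `Y₁ = Y₂`, and `Y₁ * X = Y₂ * X` implies `Y₁ = Y₂`.
(In particular, taking `|V| ≥ 2`, a cancellative element of the power semigroup of a
cancellative semigroup need not be a singleton.) -/
theorem freeSemigroup_set_of_letters_cancellative {V : Type*} [Nonempty V]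
    (X : Set (FreeSemigroup V)) (hX : X.Nonempty)
    (hX1 : X ⊆ Set.range (FreeSemigroup.of : V → FreeSemigroup V)) :
    ∀ Y₁ Y₂ : Set (FreeSemigroup V), Y₁.Nonempty → Y₂.Nonempty →
      (X * Y₁ = X * Y₂ → Y₁ = Y₂) ∧ (Y₁ * X = Y₂ * X → Y₁ = Y₂) :=
  freeSemigroup_set_of_letters_cancellative_general X hX hX1
end

section
/- Let H and K be numerical monoids, i.e., additive submonoids of the natural numbers ℕ whose complement in ℕ is finite. If the semigroup of nonempty finite subsets of H under setwise addition is isomorphic to the semigroup of nonempty finite subsets of K under setwise addition, then H = K. -/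
/-!
In the finitary power of a numerical monoid `H` the cancellative elements are exactly the
singletons: if `X` has minimum `a` and maximum `b > a`, put `d = b - a` and take `N` beyond the
gaps of `H`; removing the midpoint `N + d` from the interval `[N, N + 2d]` does not change its sum
with `X`. An isomorphism of finitary powers therefore restricts to an isomorphism `H ≃+ K`. Such
an isomorphism is multiplication by a natural number (compare the images of `x • y = y • x` and
use the coprime elements `N, N + 1` of `H`), and so is its inverse, hence it is the identity.
-/

open Pointwise

/-- The finitary power semigroup of an additive semigroup `S`: nonempty finite subsets
under setwise addition. -/
noncomputable instance finitaryPowerAddSemigroup (S : Type*) [AddSemigroup S] :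
    AddSemigroup {X : Set S // X.Finite ∧ X.Nonempty} where
  add X Y := ⟨X.1 + Y.1, X.2.1.add Y.2.1, X.2.2.add Y.2.2⟩
  add_assoc X Y Z := Subtype.ext (add_assoc X.1 Y.1 Z.1)

lemma AddEquiv.isAddLeftRegular_apply_iff {A B : Type*} [Add A] [Add B] (φ : A ≃+ B) {a : A} :
    IsAddLeftRegular (φ a) ↔ IsAddLeftRegular a := by
  constructor
  · intro h y z hyz
    apply φ.injective
    apply h
    simp only [← map_add]
    exact congrArg φ hyz
  · intro h y z hyz
    apply φ.symm.injective
    apply h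
    simpa only [map_add, φ.symm_apply_apply] using congrArg φ.symm hyz

abbrev FinitaryPower (S : Type*) := {X : Set S // X.Finite ∧ X.Nonempty}

namespace FinitaryPower

variable {S T : Type*}

def single (x : S) : FinitaryPower S :=
  ⟨{x}, Set.finite_singleton x, Set.singleton_nonempty x⟩

lemma single_injective : Function.Injective (single : S → FinitaryPower S) :=
  fun _ _ h => Set.singleton_injective (congrArg Subtype.val h)

variable [AddSemigroup S] [AddSemigroup T]

lemma single_add (x y : S) : single (x + y) = single x + single y :=
  Subtype.ext Set.singleton_add_singleton.symm

lemma isAddLeftRegular_single [IsLeftCancelAdd S] (x : S) : IsAddLeftRegular (single x) := by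
  intro Y Z h
  have h' : ({x} : Set S) + Y.1 = {x} + Z.1 := congrArg Subtype.val h
  rw [Set.singleton_add, Set.singleton_add] at h'
  exact Subtype.ext ((add_right_injective x).image_injective h')

lemma exists_apply_single_eq_single [IsLeftCancelAdd S] (φ : FinitaryPower S ≃+ FinitaryPower T)
    (hT : ∀ Y : FinitaryPower T, IsAddLeftRegular Y → ∃ y, Y = single y) (x : S) :
    ∃ y, φ (single x) = single y :=
  hT _ (φ.isAddLeftRegular_apply_iff.2 (isAddLeftRegular_single x))

lemma nonempty_addEquiv_of_addEquiv [IsLeftCancelAdd S] [IsLeftCancelAdd T]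
    (φ : FinitaryPower S ≃+ FinitaryPower T)
    (hS : ∀ X : FinitaryPower S, IsAddLeftRegular X → ∃ x, X = single x)
    (hT : ∀ Y : FinitaryPower T, IsAddLeftRegular Y → ∃ y, Y = single y) :
    Nonempty (S ≃+ T) := by
  choose f hf using exists_apply_single_eq_single φ hT
  choose g hg using exists_apply_single_eq_single φ.symm hS
  exact ⟨{ toFun := f
           invFun := g
           left_inv := fun x => single_injective <| by
             rw [← hg, ← hf, φ.symm_apply_apply]
           right_inv := fun y => single_injective <| by
             rw [← hf, ← hg, φ.apply_symm_apply]
           map_add' := fun x y => single_injective <| by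
             rw [single_add, ← hf, ← hf, ← hf, single_add, map_add] }⟩

end FinitaryPower

namespace AddSubmonoid

open FinitaryPower

variable {H K : AddSubmonoid ℕ}

lemma exists_forall_le_mem (hH : ((H : Set ℕ)ᶜ).Finite) : ∃ N, 0 < N ∧ ∀ n, N ≤ n → n ∈ H := by
  obtain ⟨M, hM⟩ := hH.bddAbove
  exact ⟨M + 1, M.succ_pos, fun n hn => by_contra fun hn' => by have := hM hn'; omega⟩

lemma add_preimage_Icc_sdiff_eq {N : ℕ} (hN : ∀ n, N ≤ n → n ∈ H) {X : Set H} {a b : H}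
    (ha : a ∈ X) (hb : b ∈ X) (hab : (a : ℕ) < b) (hX : ∀ x ∈ X, (a : ℕ) ≤ x ∧ (x : ℕ) ≤ b) :
    X + Subtype.val ⁻¹' (Set.Icc N (N + 2 * (b - a)) \ {N + (b - a)}) =
      X + Subtype.val ⁻¹' Set.Icc N (N + 2 * (b - a)) := by
  refine (Set.add_subset_add_left fun _ hy => hy.1).antisymm ?_
  rintro _ ⟨x, hx, y, hy, rfl⟩
  obtain ⟨hax, hxb⟩ := hX x hx
  -- With `d = b - a`, `x + (N + d)` is `a + (N + 2d)` if `x = b`, and `b + (N + d - (b - x))` otherwise.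
  by_cases hmid : (y : ℕ) = N + (b - a)
  · by_cases hxb' : (x : ℕ) = b
    · refine ⟨a, ha, ⟨N + 2 * (b - a), hN _ (by omega)⟩, ?_, Subtype.ext ?_⟩
      · simp only [Set.mem_preimage, Set.mem_sdiff, Set.mem_Icc, Set.mem_singleton_iff]
        omega
      · simp only [AddMemClass.coe_add]
        omega
    · refine ⟨b, hb, ⟨N + (b - a) - (b - x), hN _ (by omega)⟩, ?_, Subtype.ext ?_⟩
      · simp only [Set.mem_preimage, Set.mem_sdiff, Set.mem_Icc, Set.mem_singleton_iff]
        omega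
      · simp only [AddMemClass.coe_add]
        omega
  · exact ⟨x, hx, y, ⟨hy, hmid⟩, rfl⟩

lemma exists_eq_single_of_isAddLeftRegular (hH : ((H : Set ℕ)ᶜ).Finite) (X : FinitaryPower H)
    (hX : IsAddLeftRegular X) : ∃ x, X = single x := by
  obtain ⟨N, -, hN⟩ := exists_forall_le_mem hH
  obtain ⟨a, ha, hmin⟩ := Set.exists_min_image X.1 (fun x : H => (x : ℕ)) X.2.1 X.2.2
  obtain ⟨b, hb, hmax⟩ := Set.exists_max_image X.1 (fun x : H => (x : ℕ)) X.2.1 X.2.2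
  by_cases hab : (a : ℕ) < b
  · exfalso
    set d := (b : ℕ) - a
    have hfin (s : Set ℕ) (hs : s ⊆ Set.Icc N (N + 2 * d)) : (Subtype.val ⁻¹' s : Set H).Finite :=
      ((Set.finite_Icc _ _).subset hs).preimage Subtype.val_injective.injOn
    have hNmem : (⟨N, hN N le_rfl⟩ : H) ∈ Subtype.val ⁻¹' (Set.Icc N (N + 2 * d) \ {N + d}) := by
      simp only [Set.mem_preimage, Set.mem_sdiff, Set.mem_Icc, Set.mem_singleton_iff]
      omega
    let Y : FinitaryPower H := ⟨_, hfin _ subset_rfl, _, hNmem.1⟩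
    let Z : FinitaryPower H := ⟨_, hfin _ Set.sdiff_subset, _, hNmem⟩
    have hYZ : Z = Y := hX <|
      Subtype.ext (add_preimage_Icc_sdiff_eq hN ha hb hab fun x hx => ⟨hmin x hx, hmax x hx⟩)
    have hmid : (⟨N + d, hN _ (by omega)⟩ : H) ∈ Y.1 := by
      simp only [Y, Set.mem_preimage, Set.mem_Icc]
      omega
    rw [← hYZ] at hmid
    exact hmid.2 rfl
  · refine ⟨a, Subtype.ext (Set.eq_singleton_iff_unique_mem.2 ⟨ha, fun x hx => ?_⟩)⟩
    have := hmin x hx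
    have := hmax x hx
    exact Subtype.ext (by omega)

lemma exists_eq_mul_of_addMonoidHom (hH : ((H : Set ℕ)ᶜ).Finite) (f : H →+ ℕ) :
    ∃ m, ∀ x : H, f x = m * x := by
  obtain ⟨N, hN0, hN⟩ := exists_forall_le_mem hH
  have hcross (x y : H) : x * f y = y * f x := by
    have hxy : (x : ℕ) • y = (y : ℕ) • x := Subtype.ext (by simp [mul_comm])
    simpa only [map_nsmul, smul_eq_mul] using congrArg f hxy
  let p : H := ⟨N, hN N le_rfl⟩
  obtain ⟨m, hm⟩ : N ∣ f p :=
    (Nat.coprime_self_add_right.2 (Nat.coprime_one_right N)).dvd_of_dvd_mul_left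
      ⟨_, hcross ⟨N + 1, hN _ (by omega)⟩ p⟩
  refine ⟨m, fun x => Nat.eq_of_mul_eq_mul_left hN0 ?_⟩
  rw [hcross p x, hm]
  ring

lemma le_of_addEquiv (hH : ((H : Set ℕ)ᶜ).Finite) (hK : ((K : Set ℕ)ᶜ).Finite) (e : H ≃+ K) :
    H ≤ K := by
  obtain ⟨m, hm⟩ := exists_eq_mul_of_addMonoidHom hH (K.subtype.comp e.toAddMonoidHom)
  obtain ⟨m', hm'⟩ := exists_eq_mul_of_addMonoidHom hK (H.subtype.comp e.symm.toAddMonoidHom)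
  have he (x : H) : (e x : ℕ) = m * x := hm x
  have he' (y : K) : (e.symm y : ℕ) = m' * y := hm' y
  obtain ⟨N, hN0, hN⟩ := exists_forall_le_mem hH
  have hm1 : m = 1 := by
    have h : m' * m * N = 1 * N := by
      simpa only [he, AddEquiv.symm_apply_apply, mul_assoc, one_mul] using
        (he' (e ⟨N, hN N le_rfl⟩)).symm
    exact Nat.eq_one_of_mul_eq_one_left (Nat.eq_of_mul_eq_mul_right hN0 h)
  intro n hn
  simpa only [he, hm1, one_mul] using (e ⟨n, hn⟩).2

end AddSubmonoid

/-- Let `H` and `K` be numerical monoids, i.e., additive submonoids of `ℕ`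
with finite complement. If the semigroups of nonempty finite subsets of `H` and of `K` under
setwise addition are isomorphic, then `H = K`. -/
theorem numericalMonoid_eq_of_finitaryPower_iso (H K : AddSubmonoid ℕ)
    (hH : ((H : Set ℕ)ᶜ).Finite) (hK : ((K : Set ℕ)ᶜ).Finite)
    (h : Nonempty ({X : Set H // X.Finite ∧ X.Nonempty} ≃+
        {X : Set K // X.Finite ∧ X.Nonempty})) :
    H = K := by
  obtain ⟨φ⟩ := h
  obtain ⟨e⟩ := FinitaryPower.nonempty_addEquiv_of_addEquiv φ
    (AddSubmonoid.exists_eq_single_of_isAddLeftRegular hH)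
    (AddSubmonoid.exists_eq_single_of_isAddLeftRegular hK)
  exact le_antisymm (AddSubmonoid.le_of_addEquiv hH hK e)
    (AddSubmonoid.le_of_addEquiv hK hH e.symm)
end
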